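/- arXiv:2307.03346 — 4 statements merged into one kernel-verified Lean document; each statement's English description precedes it below -/
import Mathlib

section
/- For every integer j ≥ 1 and every p ∈ (0,1), the quantity a - b is strictly positive, where a = (∫₀¹ (1-py)^{-2} y^{j+1} dy)(∫₀¹ (1-py)^{-1} y^{j-1} dy) and b = (∫₀¹ (1-py)^{-2} y^{j} dy)(∫₀¹ (1-py)^{-1} y^{j} dy). Moreover a - b = ∫₀¹∫₀^x (1-py)^{-2}(1-px)^{-2} y^{j-1} x^{j-1} (y-x)² dy dx. -/
open Real MeasureTheory

namespace Stmt5Aux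

noncomputable def Fa (p : ℝ) (k : ℕ) (y : ℝ) : ℝ := ((1 - p * y) ^ 2)⁻¹ * y ^ (k + 1 + 1)
noncomputable def Fb (p : ℝ) (k : ℕ) (y : ℝ) : ℝ := ((1 - p * y) ^ 2)⁻¹ * y ^ (k + 1)
noncomputable def Ga (p : ℝ) (k : ℕ) (x : ℝ) : ℝ := (1 - p * x)⁻¹ * x ^ k
noncomputable def Gb (p : ℝ) (k : ℕ) (x : ℝ) : ℝ := (1 - p * x)⁻¹ * x ^ (k + 1)
noncomputable def Hf (p : ℝ) (k : ℕ) (x y : ℝ) : ℝ :=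
  Fa p k y * Ga p k x - Fb p k y * Gb p k x
noncomputable def Kf (p : ℝ) (k : ℕ) (x y : ℝ) : ℝ :=
  ((1 - p * y) ^ 2)⁻¹ * ((1 - p * x) ^ 2)⁻¹ * y ^ k * x ^ k * (y - x) ^ 2
noncomputable def KG (p : ℝ) (k : ℕ) (z : ℝ × ℝ) : ℝ :=
  if z.2 ≤ z.1 then Kf p k z.1 z.2 else 0
noncomputable def T1 (p : ℝ) (k : ℕ) (z : ℝ × ℝ) : ℝ :=
  if z.2 ≤ z.1 then Hf p k z.1 z.2 else 0
noncomputable def T2 (p : ℝ) (k : ℕ) (z : ℝ × ℝ) : ℝ :=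
  if z.1 < z.2 then Hf p k z.1 z.2 else 0
noncomputable def T2s (p : ℝ) (k : ℕ) (z : ℝ × ℝ) : ℝ :=
  if z.2 < z.1 then Hf p k z.2 z.1 else 0

lemma Hf_add {p : ℝ} (k : ℕ) {x y : ℝ} (hx : 1 - p * x ≠ 0) (hy : 1 - p * y ≠ 0) :
    Hf p k x y + Hf p k y x = Kf p k x y := by
  unfold Hf Fa Fb Ga Gb Kf
  field_simp
  ring

lemma Hf_self (p : ℝ) (k : ℕ) (x : ℝ) : Hf p k x x = 0 := by
  unfold Hf Fa Fb Ga Gb; ring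

lemma Kf_self (p : ℝ) (k : ℕ) (x : ℝ) : Kf p k x x = 0 := by
  unfold Kf; ring

lemma pointwise {p : ℝ} (k : ℕ) {x y : ℝ} (hx : 1 - p * x ≠ 0) (hy : 1 - p * y ≠ 0) :
    T1 p k (x, y) + T2s p k (x, y) = KG p k (x, y) := by
  unfold T1 T2s KG
  rcases lt_trichotomy y x with h | h | h
  · rw [if_pos h.le, if_pos h, if_pos h.le]
    exact Hf_add k hx hy
  · subst h
    simp [Hf_self, Kf_self]
  · rw [if_neg (not_le.mpr h), if_neg (not_lt.mpr h.le), if_neg (not_le.mpr h), add_zero]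

end Stmt5Aux

open Stmt5Aux

set_option maxHeartbeats 2000000 in
/-- For `j ≥ 1` and `p ∈ (0,1)`, with
`a = (∫₀¹ (1-py)⁻² y^{j+1} dy)(∫₀¹ (1-py)⁻¹ y^{j-1} dy)` and
`b = (∫₀¹ (1-py)⁻² y^{j} dy)(∫₀¹ (1-py)⁻¹ y^{j} dy)`, we have `a - b > 0`,
and `a - b` equals the double integral
`∫₀¹∫₀^x (1-py)⁻²(1-px)⁻² y^{j-1} x^{j-1} (y-x)² dy dx`. -/
theorem stmt5 (j : ℕ) (hj : 1 ≤ j) (p : ℝ) (hp : p ∈ Set.Ioo (0:ℝ) 1)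
    (a b : ℝ)
    (ha : a = (∫ y in (0:ℝ)..1, ((1 - p * y) ^ 2)⁻¹ * y ^ (j + 1)) *
              (∫ y in (0:ℝ)..1, (1 - p * y)⁻¹ * y ^ (j - 1)))
    (hb : b = (∫ y in (0:ℝ)..1, ((1 - p * y) ^ 2)⁻¹ * y ^ j) *
              (∫ y in (0:ℝ)..1, (1 - p * y)⁻¹ * y ^ j)) :
    0 < a - b ∧
    a - b = ∫ x in (0:ℝ)..1, ∫ y in (0:ℝ)..x,
        ((1 - p * y) ^ 2)⁻¹ * ((1 - p * x) ^ 2)⁻¹ *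
          y ^ (j - 1) * x ^ (j - 1) * (y - x) ^ 2 := by
  obtain ⟨hp0, hp1⟩ := hp
  obtain ⟨k, rfl⟩ : ∃ k, j = k + 1 := ⟨j - 1, (Nat.succ_pred_eq_of_pos hj).symm⟩
  simp only [Nat.add_sub_cancel] at ha hb ⊢
  have hne : ∀ t ∈ Set.Icc (0:ℝ) 1, 1 - p * t ≠ 0 := by
    intro t ht; nlinarith [ht.1, ht.2]
  -- 1D continuity
  have cFa : ContinuousOn (Fa p k) (Set.Icc 0 1) := by
    unfold Fa
    exact (((continuousOn_const.sub (continuousOn_const.mul continuousOn_id)).pow 2).inv₀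
      (fun t ht => pow_ne_zero _ (hne t ht))).mul ((continuous_pow _).continuousOn)
  have cFb : ContinuousOn (Fb p k) (Set.Icc 0 1) := by
    unfold Fb
    exact (((continuousOn_const.sub (continuousOn_const.mul continuousOn_id)).pow 2).inv₀
      (fun t ht => pow_ne_zero _ (hne t ht))).mul ((continuous_pow _).continuousOn)
  have cGa : ContinuousOn (Ga p k) (Set.Icc 0 1) := by
    unfold Ga
    exact ((continuousOn_const.sub (continuousOn_const.mul continuousOn_id)).inv₀
      (fun t ht => hne t ht)).mul ((continuous_pow _).continuousOn)
  have cGb : ContinuousOn (Gb p k) (Set.Icc 0 1) := by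
    unfold Gb
    exact ((continuousOn_const.sub (continuousOn_const.mul continuousOn_id)).inv₀
      (fun t ht => hne t ht)).mul ((continuous_pow _).continuousOn)
  -- 2D continuity
  have cH2 : ContinuousOn (fun z : ℝ × ℝ => Hf p k z.1 z.2)
      (Set.Icc 0 1 ×ˢ Set.Icc 0 1) := by
    unfold Hf
    exact ((cFa.comp continuous_snd.continuousOn fun z hz => hz.2).mul
      (cGa.comp continuous_fst.continuousOn fun z hz => hz.1)).sub
      ((cFb.comp continuous_snd.continuousOn fun z hz => hz.2).mul
      (cGb.comp continuous_fst.continuousOn fun z hz => hz.1))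
  have cK2 : ContinuousOn (fun z : ℝ × ℝ => Kf p k z.1 z.2)
      (Set.Icc 0 1 ×ˢ Set.Icc 0 1) := by
    unfold Kf
    have h1 : ContinuousOn (fun z : ℝ × ℝ => ((1 - p * z.2) ^ 2)⁻¹)
        (Set.Icc 0 1 ×ˢ Set.Icc 0 1) :=
      ((continuousOn_const.sub (continuousOn_const.mul continuous_snd.continuousOn)).pow 2).inv₀
        (fun z hz => pow_ne_zero _ (hne z.2 hz.2))
    have h2 : ContinuousOn (fun z : ℝ × ℝ => ((1 - p * z.1) ^ 2)⁻¹)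
        (Set.Icc 0 1 ×ˢ Set.Icc 0 1) :=
      ((continuousOn_const.sub (continuousOn_const.mul continuous_fst.continuousOn)).pow 2).inv₀
        (fun z hz => pow_ne_zero _ (hne z.1 hz.1))
    exact ((((h1.mul h2).mul ((continuous_snd.pow k).continuousOn)).mul
      ((continuous_fst.pow k).continuousOn)).mul
      (((continuous_snd.sub continuous_fst).pow 2).continuousOn))
  -- bounds
  obtain ⟨CH, hCH⟩ := (isCompact_Icc.prod isCompact_Icc).exists_bound_of_continuousOn cH2
  obtain ⟨CK, hCK⟩ := (isCompact_Icc.prod isCompact_Icc).exists_bound_of_continuousOn cK2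
  have h00 : ((0:ℝ), (0:ℝ)) ∈ Set.Icc (0:ℝ) 1 ×ˢ Set.Icc (0:ℝ) 1 :=
    ⟨Set.left_mem_Icc.2 zero_le_one, Set.left_mem_Icc.2 zero_le_one⟩
  have hCH0 : 0 ≤ CH := le_trans (norm_nonneg _) (hCH _ h00)
  have hCK0 : 0 ≤ CK := le_trans (norm_nonneg _) (hCK _ h00)
  -- measures
  set μ1 : Measure ℝ := volume.restrict (Set.Ioc 0 1) with hμ1def
  haveI : IsFiniteMeasure μ1 := ⟨by
    rw [hμ1def, Measure.restrict_apply_univ, Real.volume_Ioc]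
    exact ENNReal.ofReal_lt_top⟩
  have hprod : μ1.prod μ1
      = (volume.prod volume).restrict (Set.Ioc (0:ℝ) 1 ×ˢ Set.Ioc (0:ℝ) 1) := by
    rw [hμ1def]; exact Measure.prod_restrict _ _
  have hsqm : MeasurableSet (Set.Ioc (0:ℝ) 1 ×ˢ Set.Ioc (0:ℝ) 1) :=
    measurableSet_Ioc.prod measurableSet_Ioc
  have hsub_sq : (Set.Ioc (0:ℝ) 1 ×ˢ Set.Ioc (0:ℝ) 1) ⊆ (Set.Icc (0:ℝ) 1 ×ˢ Set.Icc (0:ℝ) 1) :=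
    Set.prod_mono Set.Ioc_subset_Icc_self Set.Ioc_subset_Icc_self
  -- integrability helper
  have int_aux : ∀ f : ℝ × ℝ → ℝ, Measurable f → ∀ C : ℝ,
      (∀ z ∈ Set.Ioc (0:ℝ) 1 ×ˢ Set.Ioc (0:ℝ) 1, ‖f z‖ ≤ C) →
      Integrable f (μ1.prod μ1) := by
    intro f hm C hb'
    refine Integrable.mono' (integrable_const C) hm.aestronglyMeasurable ?_
    rw [hprod]
    filter_upwards [ae_restrict_mem hsqm] with z hz using hb' z hz
  -- measurability
  have mH : Measurable (fun z : ℝ × ℝ => Hf p k z.1 z.2) := by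
    unfold Hf Fa Fb Ga Gb; fun_prop
  have mK : Measurable (fun z : ℝ × ℝ => Kf p k z.1 z.2) := by
    unfold Kf; fun_prop
  have mT1 : Measurable (T1 p k) :=
    Measurable.ite (measurableSet_le measurable_snd measurable_fst) mH measurable_const
  have mT2 : Measurable (T2 p k) :=
    Measurable.ite (measurableSet_lt measurable_fst measurable_snd) mH measurable_const
  have mT2s : Measurable (T2s p k) :=
    Measurable.ite (measurableSet_lt measurable_snd measurable_fst)
      (mH.comp measurable_swap) measurable_const
  have mKG : Measurable (KG p k) :=
    Measurable.ite (measurableSet_le measurable_snd measurable_fst) mK measurable_const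
  -- integrability
  have iH : Integrable (fun z : ℝ × ℝ => Hf p k z.1 z.2) (μ1.prod μ1) :=
    int_aux _ mH CH fun z hz => hCH z (hsub_sq hz)
  have iT1 : Integrable (T1 p k) (μ1.prod μ1) := by
    refine int_aux _ mT1 CH fun z hz => ?_
    unfold T1; split
    · exact hCH z (hsub_sq hz)
    · simpa using hCH0
  have iT2 : Integrable (T2 p k) (μ1.prod μ1) := by
    refine int_aux _ mT2 CH fun z hz => ?_
    unfold T2; split
    · exact hCH z (hsub_sq hz)
    · simpa using hCH0
  have iT2s : Integrable (T2s p k) (μ1.prod μ1) := by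
    refine int_aux _ mT2s CH fun z hz => ?_
    unfold T2s; split
    · exact hCH (z.2, z.1) ⟨(hsub_sq hz).2, (hsub_sq hz).1⟩
    · simpa using hCH0
  have iKG : Integrable (KG p k) (μ1.prod μ1) := by
    refine int_aux _ mKG CK fun z hz => ?_
    unfold KG; split
    · exact hCK z (hsub_sq hz)
    · simpa using hCK0
  -- interval integrability
  have uIcc01 : Set.uIcc (0:ℝ) 1 = Set.Icc 0 1 := Set.uIcc_of_le zero_le_one
  have iiFa : IntervalIntegrable (Fa p k) volume 0 1 :=
    ContinuousOn.intervalIntegrable (by rw [uIcc01]; exact cFa)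
  have iiFb : IntervalIntegrable (Fb p k) volume 0 1 :=
    ContinuousOn.intervalIntegrable (by rw [uIcc01]; exact cFb)
  have iiGa : IntervalIntegrable (Ga p k) volume 0 1 :=
    ContinuousOn.intervalIntegrable (by rw [uIcc01]; exact cGa)
  have iiGb : IntervalIntegrable (Gb p k) volume 0 1 :=
    ContinuousOn.intervalIntegrable (by rw [uIcc01]; exact cGb)
  -- step 1
  have step1 : a - b = ∫ x in (0:ℝ)..1, ∫ y in (0:ℝ)..1, Hf p k x y := by
    have inner : ∀ x : ℝ, (∫ y in (0:ℝ)..1, Hf p k x y)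
        = (∫ y in (0:ℝ)..1, Fa p k y) * Ga p k x
          - (∫ y in (0:ℝ)..1, Fb p k y) * Gb p k x := by
      intro x
      unfold Hf
      rw [intervalIntegral.integral_sub (iiFa.mul_const _) (iiFb.mul_const _),
        intervalIntegral.integral_mul_const, intervalIntegral.integral_mul_const]
    have e1 : (∫ x in (0:ℝ)..1, ∫ y in (0:ℝ)..1, Hf p k x y)
        = ∫ x in (0:ℝ)..1, ((∫ y in (0:ℝ)..1, Fa p k y) * Ga p k x
            - (∫ y in (0:ℝ)..1, Fb p k y) * Gb p k x) :=
      intervalIntegral.integral_congr fun x _ => inner x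
    rw [e1, intervalIntegral.integral_sub (iiGa.const_mul _) (iiGb.const_mul _),
      intervalIntegral.integral_const_mul, intervalIntegral.integral_const_mul, ha, hb]
    unfold Fa Fb Ga Gb
    rfl
  -- step 2
  have step2 : (∫ x in (0:ℝ)..1, ∫ y in (0:ℝ)..1, Hf p k x y)
      = ∫ z, Hf p k z.1 z.2 ∂(μ1.prod μ1) := by
    rw [MeasureTheory.integral_prod _ iH, intervalIntegral.integral_of_le zero_le_one]
    refine setIntegral_congr_fun measurableSet_Ioc fun x _ => ?_
    rw [intervalIntegral.integral_of_le zero_le_one]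
  -- step 3
  have hsplit : ∀ z : ℝ × ℝ, Hf p k z.1 z.2 = T1 p k z + T2 p k z := by
    intro z; unfold T1 T2
    rcases le_or_gt z.2 z.1 with h | h
    · rw [if_pos h, if_neg (not_lt.mpr h), add_zero]
    · rw [if_neg (not_le.mpr h), if_pos h, zero_add]
  have swapT2 : ∫ z, T2 p k z ∂(μ1.prod μ1) = ∫ z, T2s p k z ∂(μ1.prod μ1) := by
    rw [← MeasureTheory.integral_prod_swap (T2 p k)]
    rfl
  have step3 : (∫ z, Hf p k z.1 z.2 ∂(μ1.prod μ1)) = ∫ z, KG p k z ∂(μ1.prod μ1) := by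
    have e1 : (∫ z, Hf p k z.1 z.2 ∂(μ1.prod μ1))
        = ∫ z, (T1 p k z + T2 p k z) ∂(μ1.prod μ1) :=
      integral_congr_ae (Filter.Eventually.of_forall hsplit)
    rw [e1, integral_add iT1 iT2, swapT2, ← integral_add iT1 iT2s, hprod]
    refine setIntegral_congr_fun hsqm fun z hz => ?_
    exact pointwise k (hne z.1 (Set.Ioc_subset_Icc_self hz.1))
      (hne z.2 (Set.Ioc_subset_Icc_self hz.2))
  -- step 4
  have step4 : (∫ z, KG p k z ∂(μ1.prod μ1))
      = ∫ x in (0:ℝ)..1, ∫ y in (0:ℝ)..x, Kf p k x y := by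
    rw [MeasureTheory.integral_prod _ iKG, intervalIntegral.integral_of_le zero_le_one]
    refine setIntegral_congr_fun measurableSet_Ioc fun x hx => ?_
    rw [intervalIntegral.integral_of_le hx.1.le]
    have e : ∀ y : ℝ, KG p k (x, y) = Set.indicator (Set.Iic x) (fun y => Kf p k x y) y := by
      intro y
      rw [Set.indicator_apply]
      simp only [KG, Set.mem_Iic]
    calc (∫ y, KG p k (x, y) ∂μ1)
        = ∫ y in Set.Ioc (0:ℝ) 1, Set.indicator (Set.Iic x) (fun y => Kf p k x y) y :=
          integral_congr_ae (Filter.Eventually.of_forall e)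
      _ = ∫ y in Set.Ioc (0:ℝ) 1 ∩ Set.Iic x, Kf p k x y :=
          setIntegral_indicator measurableSet_Iic
      _ = ∫ y in Set.Ioc (0:ℝ) x, Kf p k x y := by
          rw [Set.Ioc_inter_Iic, min_eq_right hx.2]
  have identity : a - b = ∫ x in (0:ℝ)..1, ∫ y in (0:ℝ)..x, Kf p k x y := by
    rw [step1, step2, step3, step4]
  -- positivity
  have hnn : (0 : ℝ × ℝ → ℝ) ≤ᶠ[ae (μ1.prod μ1)] KG p k := by
    rw [hprod]
    filter_upwards [ae_restrict_mem hsqm] with z hz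
    simp only [Pi.zero_apply]
    unfold KG; split
    · exact mul_nonneg (mul_nonneg (mul_nonneg (mul_nonneg
        (inv_nonneg.mpr (sq_nonneg _)) (inv_nonneg.mpr (sq_nonneg _)))
        (pow_nonneg hz.2.1.le _)) (pow_nonneg hz.1.1.le _)) (sq_nonneg _)
    · exact le_refl 0
  have hsupp : Set.Ioc (1/2 : ℝ) 1 ×ˢ Set.Ioc (1/4 : ℝ) (1/2 : ℝ)
      ⊆ Function.support (KG p k) := by
    rintro ⟨x, y⟩ ⟨hx, hy⟩
    have hyx : y < x := lt_of_le_of_lt hy.2 hx.1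
    have hx0 : (0:ℝ) < x := lt_trans (by norm_num) hx.1
    have hy0 : (0:ℝ) < y := lt_trans (by norm_num) hy.1
    have hnx : 1 - p * x ≠ 0 := hne x ⟨hx0.le, hx.2⟩
    have hny : 1 - p * y ≠ 0 := hne y ⟨hy0.le, le_trans hy.2 (by norm_num)⟩
    have hKGeq : KG p k (x, y) = Kf p k x y := if_pos hyx.le
    rw [Function.mem_support, hKGeq]
    unfold Kf
    exact ne_of_gt (mul_pos (mul_pos (mul_pos (mul_pos
      (inv_pos.mpr (pow_two_pos_of_ne_zero hny)) (inv_pos.mpr (pow_two_pos_of_ne_zero hnx)))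
      (pow_pos hy0 _)) (pow_pos hx0 _))
      (pow_two_pos_of_ne_zero (sub_ne_zero.mpr hyx.ne)))
  have hpos : 0 < ∫ z, KG p k z ∂(μ1.prod μ1) := by
    rw [integral_pos_iff_support_of_nonneg_ae hnn iKG]
    refine lt_of_lt_of_le ?_ (measure_mono hsupp)
    rw [Measure.prod_prod, hμ1def, Measure.restrict_apply measurableSet_Ioc,
      Measure.restrict_apply measurableSet_Ioc,
      Set.inter_eq_left.mpr (Set.Ioc_subset_Ioc (by norm_num) le_rfl),
      Set.inter_eq_left.mpr (Set.Ioc_subset_Ioc (by norm_num) (by norm_num)),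
      Real.volume_Ioc, Real.volume_Ioc]
    exact ENNReal.mul_pos (by norm_num [ENNReal.ofReal_pos]) (by norm_num [ENNReal.ofReal_pos])
  constructor
  · have : a - b = ∫ z, KG p k z ∂(μ1.prod μ1) := by rw [step1, step2, step3]
    rw [this]; exact hpos
  · simp only [Kf] at identity
    exact identity
end

section
/- For each integer j ≥ 1, the function φ_j(p) := 1 - (∫₀¹ (1-py)^{-1} y^j dy)/(∫₀¹ (1-py)^{-1} y^{j-1} dy) is strictly decreasing on (0,1). -/
/-!
Write `w_p(y) = (1 - p y)⁻¹ y^(j-1)`, so that `1 - φ_j(p)` is the mean of `y` under the weight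
`w_p` on `[0, 1]`. For `p < q` the likelihood ratio `w_q / w_p = (1 - p y) / (1 - q y)` is strictly
increasing, and a weight whose ratio to another one increases has a strictly larger mean: with
`m` the `w_p`-mean and `c` the ratio at `m`, the integrand `(y - m) (w_q(y) - c w_p(y))` is positive
off `y = m`, while its integral is `∫ (y - m) w_q`.
-/

open MeasureTheory Set intervalIntegral

section LikelihoodRatio

variable {a b : ℝ} {w v : ℝ → ℝ}

theorem integral_id_mul_div_integral_mem_Ioo (hab : a < b) (hw : IntervalIntegrable w volume a b)
    (hw_pos : ∀ y ∈ Ioo a b, 0 < w y) :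
    (∫ y in a..b, y * w y) / (∫ y in a..b, w y) ∈ Ioo a b := by
  have hW : 0 < ∫ y in a..b, w y := intervalIntegral_pos_of_pos_on hw hw_pos hab
  have hyw : IntervalIntegrable (fun y => y * w y) volume a b :=
    hw.continuousOn_mul continuousOn_id
  have h_left : 0 < ∫ y in a..b, (y * w y - a * w y) := by
    refine intervalIntegral_pos_of_pos_on (hyw.sub (hw.const_mul a)) (fun y hy => ?_) hab
    rw [← sub_mul]
    exact mul_pos (sub_pos.2 hy.1) (hw_pos y hy)
  have h_right : 0 < ∫ y in a..b, (b * w y - y * w y) := by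
    refine intervalIntegral_pos_of_pos_on ((hw.const_mul b).sub hyw) (fun y hy => ?_) hab
    rw [← sub_mul]
    exact mul_pos (sub_pos.2 hy.2) (hw_pos y hy)
  rw [intervalIntegral.integral_sub hyw (hw.const_mul a),
    intervalIntegral.integral_const_mul] at h_left
  rw [intervalIntegral.integral_sub (hw.const_mul b) hyw,
    intervalIntegral.integral_const_mul] at h_right
  constructor
  · rw [lt_div_iff₀ hW]; linarith
  · rw [div_lt_iff₀ hW]; linarith

theorem integral_id_mul_mul_integral_lt_of_strictMonoOn_div (hab : a < b)
    (hw : IntervalIntegrable w volume a b) (hv : IntervalIntegrable v volume a b)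
    (hw_pos : ∀ y ∈ Ioo a b, 0 < w y) (hratio : StrictMonoOn (fun y => v y / w y) (Ioo a b)) :
    (∫ y in a..b, y * w y) * (∫ y in a..b, v y) <
      (∫ y in a..b, y * v y) * ∫ y in a..b, w y := by
  have hW : 0 < ∫ y in a..b, w y := intervalIntegral_pos_of_pos_on hw hw_pos hab
  set m := (∫ y in a..b, y * w y) / (∫ y in a..b, w y) with hm
  have hm_mem : m ∈ Ioo a b := integral_id_mul_div_integral_mem_Ioo hab hw hw_pos
  set c := v m / w m
  have hsign : ∀ y ∈ Ioo a b, y ≠ m → 0 < (y - m) * (v y - c * w y) := by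
    intro y hy hne
    have hwy := hw_pos y hy
    rw [show v y - c * w y = w y * (v y / w y - c) by field_simp]
    rcases hne.lt_or_gt with hlt | hgt
    · exact mul_pos_of_neg_of_neg (sub_neg.2 hlt)
        (mul_neg_of_pos_of_neg hwy (sub_neg.2 (hratio hy hm_mem hlt)))
    · exact mul_pos (sub_pos.2 hgt) (mul_pos hwy (sub_pos.2 (hratio hm_mem hy hgt)))
  have hyw : IntervalIntegrable (fun y => y * w y) volume a b := hw.continuousOn_mul continuousOn_id
  have hyv : IntervalIntegrable (fun y => y * v y) volume a b := hv.continuousOn_mul continuousOn_id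
  have hF : IntervalIntegrable (fun y => (y - m) * (v y - c * w y)) volume a b :=
    (hv.sub (hw.const_mul c)).continuousOn_mul (continuousOn_id.sub continuousOn_const)
  have hF_pos : 0 < ∫ y in a..b, (y - m) * (v y - c * w y) := by
    have hmem : m ∈ uIcc a b := Ioo_subset_Icc_self.trans Icc_subset_uIcc hm_mem
    have hF_left := hF.mono_set (uIcc_subset_uIcc left_mem_uIcc hmem)
    have hF_right := hF.mono_set (uIcc_subset_uIcc hmem right_mem_uIcc)
    rw [← integral_add_adjacent_intervals hF_left hF_right]
    exact add_pos
      (intervalIntegral_pos_of_pos_on hF_left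
        (fun y hy => hsign y ⟨hy.1, hy.2.trans hm_mem.2⟩ hy.2.ne) hm_mem.1)
      (intervalIntegral_pos_of_pos_on hF_right
        (fun y hy => hsign y ⟨hm_mem.1.trans hy.1, hy.2⟩ hy.1.ne') hm_mem.2)
  -- the `w`-part integrates to `c * ∫ (y - m) w = 0`
  have hF_eq : ∫ y in a..b, (y - m) * (v y - c * w y) =
      (∫ y in a..b, y * v y) - m * ∫ y in a..b, v y := by
    rw [show (fun y => (y - m) * (v y - c * w y)) =
        fun y => (y * v y - m * v y) - c * (y * w y - m * w y) from funext fun y => by ring,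
      intervalIntegral.integral_sub (hyv.sub (hv.const_mul m))
        ((hyw.sub (hw.const_mul m)).const_mul c),
      intervalIntegral.integral_const_mul, intervalIntegral.integral_sub hyv (hv.const_mul m),
      intervalIntegral.integral_sub hyw (hw.const_mul m), intervalIntegral.integral_const_mul,
      intervalIntegral.integral_const_mul, hm, div_mul_cancel₀ _ hW.ne', sub_self, mul_zero,
      sub_zero]
  rw [hF_eq, hm] at hF_pos
  rw [← div_mul_cancel₀ (∫ y in a..b, y * w y) hW.ne']
  nlinarith

end LikelihoodRatio

section Weight

variable {p q y : ℝ}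

theorem one_sub_mul_pos_of_mem_Icc (hp : p < 1) (hy : y ∈ Icc (0 : ℝ) 1) : 0 < 1 - p * y := by
  nlinarith [hy.2, mul_nonneg hy.1 (sub_pos.2 hp).le]

theorem intervalIntegrable_inv_one_sub_mul_mul_pow (hp : p < 1) (n : ℕ) :
    IntervalIntegrable (fun y => (1 - p * y)⁻¹ * y ^ n) volume 0 1 := by
  refine ContinuousOn.intervalIntegrable ?_
  rw [uIcc_of_le zero_le_one]
  refine ContinuousOn.mul (ContinuousOn.inv₀ (by fun_prop) fun y hy => ?_) (by fun_prop)
  exact (one_sub_mul_pos_of_mem_Icc hp hy).ne'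

theorem inv_one_sub_mul_mul_pow_pos (hp : p < 1) (n : ℕ) (hy : y ∈ Ioo (0 : ℝ) 1) :
    0 < (1 - p * y)⁻¹ * y ^ n :=
  mul_pos (inv_pos.2 (one_sub_mul_pos_of_mem_Icc hp (Ioo_subset_Icc_self hy))) (pow_pos hy.1 n)

theorem strictMonoOn_inv_one_sub_mul_mul_pow_div (hpq : p < q) (hq : q < 1) (n : ℕ) :
    StrictMonoOn (fun y => (1 - q * y)⁻¹ * y ^ n / ((1 - p * y)⁻¹ * y ^ n)) (Ioo 0 1) := by
  have hratio : ∀ y ∈ Ioo (0 : ℝ) 1,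
      (1 - q * y)⁻¹ * y ^ n / ((1 - p * y)⁻¹ * y ^ n) = (1 - p * y) / (1 - q * y) := by
    intro y hy
    have := (one_sub_mul_pos_of_mem_Icc (hpq.trans hq) (Ioo_subset_Icc_self hy)).ne'
    have := (one_sub_mul_pos_of_mem_Icc hq (Ioo_subset_Icc_self hy)).ne'
    have := (pow_pos hy.1 n).ne'
    field_simp
  intro y hy z hz hyz
  have hqy := one_sub_mul_pos_of_mem_Icc hq (Ioo_subset_Icc_self hy)
  have hqz := one_sub_mul_pos_of_mem_Icc hq (Ioo_subset_Icc_self hz)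
  simp only [hratio y hy, hratio z hz]
  rw [div_lt_div_iff₀ hqy hqz]
  nlinarith [mul_pos (sub_pos.2 hpq) (sub_pos.2 hyz)]

end Weight

/-- For each integer `j ≥ 1`, the function
`φ_j(p) = 1 - (∫₀¹ (1-py)⁻¹ y^j dy)/(∫₀¹ (1-py)⁻¹ y^{j-1} dy)`
is strictly decreasing on `(0,1)`. -/
theorem stmt6 (j : ℕ) (hj : 1 ≤ j) :
    StrictAntiOn
      (fun p : ℝ =>
        1 - (∫ y in (0:ℝ)..1, (1 - p * y)⁻¹ * y ^ j) /
            (∫ y in (0:ℝ)..1, (1 - p * y)⁻¹ * y ^ (j - 1)))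
      (Ioo (0:ℝ) 1) := by
  obtain ⟨n, rfl⟩ := Nat.exists_eq_add_of_le' hj
  intro p hp q hq hpq
  have hpow : ∀ r : ℝ, ∫ y in (0:ℝ)..1, (1 - r * y)⁻¹ * y ^ (n + 1) =
      ∫ y in (0:ℝ)..1, y * ((1 - r * y)⁻¹ * y ^ n) :=
    fun r => integral_congr fun y _ => by ring
  have hW : ∀ r < 1, 0 < ∫ y in (0:ℝ)..1, (1 - r * y)⁻¹ * y ^ n := fun r hr =>
    intervalIntegral_pos_of_pos_on (intervalIntegrable_inv_one_sub_mul_mul_pow hr n)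
      (fun y hy => inv_one_sub_mul_mul_pow_pos hr n hy) one_pos
  simp only [Nat.add_sub_cancel, hpow]
  rw [sub_lt_sub_iff_left, div_lt_div_iff₀ (hW p hp.2) (hW q hq.2)]
  exact integral_id_mul_mul_integral_lt_of_strictMonoOn_div one_pos
    (intervalIntegrable_inv_one_sub_mul_mul_pow hp.2 n)
    (intervalIntegrable_inv_one_sub_mul_mul_pow hq.2 n)
    (fun y hy => inv_one_sub_mul_mul_pow_pos hp.2 n hy)
    (strictMonoOn_inv_one_sub_mul_mul_pow_div hpq hq.2 n)
end

section
/- Let λ > 0 and let f : [0,∞) → [0,∞) be a nondecreasing function and g : [0,∞) → [0,∞) a function such that t ↦ e^{-λt} g(t) is nondecreasing with limit L ∈ (0,∞) as t → ∞. If ∫₀^∞ e^{-λt} |f(t) - g(t)| dt < ∞, then e^{-λt} f(t) → L as t → ∞. -/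
open Real MeasureTheory Set Filter
open scoped ENNReal

/-- If a nonnegative function is bounded below by `c > 0` on intervals of length `δ > 0`
located arbitrarily far to the right, then its lower Lebesgue integral over `(0,∞)`
cannot be finite. -/
lemma key_lemma (c δ : ℝ) (hc : 0 < c) (hδ : 0 < δ) (φ : ℝ → ℝ≥0∞)
    (H : ∀ T : ℝ, ∃ t, T ≤ t ∧ ∀ s ∈ Set.Ioc t (t + δ), ENNReal.ofReal c ≤ φ s)
    (hI : ∫⁻ t in Set.Ioi (0:ℝ), φ t ≠ ⊤) : False := by
  have claim : ∀ n : ℕ, ∃ T : ℝ, 0 ≤ T ∧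
      (n : ℝ≥0∞) * ENNReal.ofReal (c * δ) ≤ ∫⁻ x in Set.Ioc (0:ℝ) T, φ x := by
    intro n
    induction n with
    | zero => exact ⟨0, le_refl 0, by simp⟩
    | succ n ih =>
      obtain ⟨T, hT0, hT⟩ := ih
      obtain ⟨t, ht, hbound⟩ := H T
      have ht0 : 0 ≤ t := hT0.trans ht
      have hdisj : Disjoint (Set.Ioc (0:ℝ) T) (Set.Ioc t (t + δ)) := by
        rw [Set.disjoint_left]
        intro x hx1 hx2
        have := hx1.2
        have := hx2.1
        linarith
      have hsub : Set.Ioc (0:ℝ) T ∪ Set.Ioc t (t + δ) ⊆ Set.Ioc 0 (t + δ) := by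
        rintro x (h | h)
        · exact ⟨h.1, by linarith [h.2]⟩
        · exact ⟨lt_of_le_of_lt ht0 h.1, h.2⟩
      have hpiece : ENNReal.ofReal (c * δ) ≤ ∫⁻ x in Set.Ioc t (t + δ), φ x := by
        have hvol : ENNReal.ofReal c * volume (Set.Ioc t (t + δ)) = ENNReal.ofReal (c * δ) := by
          rw [Real.volume_Ioc, ← ENNReal.ofReal_mul hc.le]
          ring_nf
        calc ENNReal.ofReal (c * δ)
            = ENNReal.ofReal c * volume (Set.Ioc t (t + δ)) := hvol.symm
          _ = ∫⁻ x, (Set.Ioc t (t + δ)).indicator (fun _ => ENNReal.ofReal c) x := by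
              rw [lintegral_indicator_const measurableSet_Ioc]
          _ ≤ ∫⁻ x, (Set.Ioc t (t + δ)).indicator φ x := by
              apply lintegral_mono
              intro x
              by_cases hx : x ∈ Set.Ioc t (t + δ)
              · simpa [hx] using hbound x hx
              · simp [hx]
          _ = ∫⁻ x in Set.Ioc t (t + δ), φ x := lintegral_indicator measurableSet_Ioc φ
      refine ⟨t + δ, by linarith, ?_⟩
      calc ((n + 1 : ℕ) : ℝ≥0∞) * ENNReal.ofReal (c * δ)
          = (n : ℝ≥0∞) * ENNReal.ofReal (c * δ) + ENNReal.ofReal (c * δ) := by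
            push_cast; ring
        _ ≤ (∫⁻ x in Set.Ioc (0:ℝ) T, φ x) + ∫⁻ x in Set.Ioc t (t + δ), φ x :=
            add_le_add hT hpiece
        _ = ∫⁻ x in Set.Ioc (0:ℝ) T ∪ Set.Ioc t (t + δ), φ x := by
            rw [Measure.restrict_union hdisj measurableSet_Ioc, lintegral_add_measure]
        _ ≤ ∫⁻ x in Set.Ioc (0:ℝ) (t + δ), φ x :=
            lintegral_mono' (Measure.restrict_mono hsub le_rfl) le_rfl
  have hcδ : 0 < c * δ := mul_pos hc hδ
  obtain ⟨n, hn⟩ := exists_nat_gt ((∫⁻ t in Set.Ioi (0:ℝ), φ t).toReal / (c * δ))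
  obtain ⟨T, hT0, hT⟩ := claim n
  have hle : (n : ℝ≥0∞) * ENNReal.ofReal (c * δ) ≤ ∫⁻ t in Set.Ioi (0:ℝ), φ t := by
    refine hT.trans (lintegral_mono' (Measure.restrict_mono ?_ le_rfl) le_rfl)
    exact Set.Ioc_subset_Ioi_self
  have := ENNReal.toReal_mono hI hle
  rw [ENNReal.toReal_mul, ENNReal.toReal_natCast, ENNReal.toReal_ofReal hcδ.le] at this
  have hn' : (∫⁻ t in Set.Ioi (0:ℝ), φ t).toReal < n * (c * δ) := by
    rwa [div_lt_iff₀ hcδ] at hn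
  linarith

/-- Harris-type argument: if `f` is nondecreasing and nonnegative on `[0,∞)`,
`t ↦ e^{-λt} g(t)` is nondecreasing with limit `L ∈ (0,∞)`, and
`∫₀^∞ e^{-λt}|f(t)-g(t)| dt < ∞` (as an upper Lebesgue integral), then
`e^{-λt} f(t) → L` as `t → ∞`. -/
theorem stmt9 (lam : ℝ) (hlam : 0 < lam) (f g : ℝ → ℝ)
    (hf0 : ∀ t, 0 ≤ t → 0 ≤ f t) (hg0 : ∀ t, 0 ≤ t → 0 ≤ g t)
    (hfmono : MonotoneOn f (Ici (0:ℝ)))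
    (hgmono : MonotoneOn (fun t => exp (-lam * t) * g t) (Ici (0:ℝ)))
    (L : ℝ) (hL : 0 < L)
    (hgL : Tendsto (fun t => exp (-lam * t) * g t) atTop (nhds L))
    (hint : ∫⁻ t in Ioi (0:ℝ), ENNReal.ofReal (exp (-lam * t) * |f t - g t|) < ⊤) :
    Tendsto (fun t => exp (-lam * t) * f t) atTop (nhds L) := by
  have hIne : ∫⁻ t in Ioi (0:ℝ), ENNReal.ofReal (exp (-lam * t) * |f t - g t|) ≠ ⊤ := hint.ne
  -- G s ≤ L for all s ≥ 0
  have hGle : ∀ s, 0 ≤ s → exp (-lam * s) * g s ≤ L := by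
    intro s hs
    refine ge_of_tendsto hgL (eventually_atTop.2 ⟨s, fun u hu => ?_⟩)
    simpa using hgmono (Set.mem_Ici.2 hs) (Set.mem_Ici.2 (hs.trans hu)) hu
  rw [Metric.tendsto_atTop]
  intro ε hε
  set ε₀ := min ε L with hε₀def
  have hε₀ : 0 < ε₀ := lt_min hε hL
  have hε₀L : ε₀ ≤ L := min_le_right _ _
  have hε₀ε : ε₀ ≤ ε := min_le_left _ _
  -- eventually G s > L - ε₀/8
  obtain ⟨T₀, hT₀⟩ : ∃ T₀ : ℝ, ∀ s ≥ T₀, L - ε₀ / 8 < exp (-lam * s) * g s :=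
    eventually_atTop.1 (hgL.eventually (eventually_gt_nhds (by linarith)))
  -- Upper bound: eventually F t < L + ε₀/2
  have hupper : ∀ᶠ t in atTop, exp (-lam * t) * f t < L + ε₀ / 2 := by
    by_contra hcon
    rw [Filter.not_eventually] at hcon
    have hfreq := Filter.frequently_atTop.1 hcon
    set a := L + ε₀ / 2 with hadef
    set b := L + ε₀ / 4 with hbdef
    have hbpos : 0 < b := by positivity
    have hapos : 0 < a := by positivity
    have hba : b < a := by simp only [hadef, hbdef]; linarith
    set δ := Real.log (a / b) / lam with hδdef
    have hδpos : 0 < δ :=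
      div_pos (Real.log_pos ((one_lt_div hbpos).2 hba)) hlam
    have hexpδ : exp (-lam * δ) = b / a := by
      rw [show -lam * δ = -Real.log (a / b) by rw [hδdef]; field_simp; try ring,
        Real.exp_neg, Real.exp_log (div_pos hapos hbpos), inv_div]
    refine key_lemma (ε₀ / 4) δ (by positivity) hδpos _ ?_ hIne
    intro T
    obtain ⟨t, ht, htF⟩ := hfreq (max T 0)
    push_neg at htF
    have ht0 : 0 ≤ t := le_trans (le_max_right T 0) ht
    refine ⟨t, le_trans (le_max_left T 0) ht, ?_⟩
    intro s hs
    have hs0 : 0 ≤ s := le_trans ht0 hs.1.le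
    have hfs : f t ≤ f s :=
      hfmono (Set.mem_Ici.2 ht0) (Set.mem_Ici.2 hs0) hs.1.le
    have hexps : b / a ≤ exp (-lam * (s - t)) := by
      rw [← hexpδ]
      apply Real.exp_le_exp.2
      have : s - t ≤ δ := by linarith [hs.2]
      nlinarith [hlam.le]
    have hFt : a ≤ exp (-lam * t) * f t := htF
    have hkey : b ≤ exp (-lam * s) * f s := by
      have h1 : exp (-lam * s) * f t = exp (-lam * (s - t)) * (exp (-lam * t) * f t) := by
        rw [← mul_assoc, ← Real.exp_add]; ring_nf
      have h2 : b / a * a ≤ exp (-lam * (s - t)) * (exp (-lam * t) * f t) :=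
        mul_le_mul hexps hFt hapos.le (Real.exp_nonneg _)
      rw [div_mul_cancel₀ _ hapos.ne'] at h2
      calc b ≤ exp (-lam * s) * f t := by rw [h1]; exact h2
        _ ≤ exp (-lam * s) * f s :=
            mul_le_mul_of_nonneg_left hfs (Real.exp_nonneg _)
    have hGs : exp (-lam * s) * g s ≤ L := hGle s hs0
    have hdiff : ε₀ / 4 ≤ exp (-lam * s) * (f s - g s) := by
      have : exp (-lam * s) * (f s - g s)
          = exp (-lam * s) * f s - exp (-lam * s) * g s := by ring
      rw [this]
      simp only [hbdef] at hkey
      linarith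
    have habs : ε₀ / 4 ≤ exp (-lam * s) * |f s - g s| := by
      have hpos : 0 < f s - g s := by
        by_contra hle
        push_neg at hle
        nlinarith [Real.exp_pos (-lam * s)]
      rwa [abs_of_pos hpos]
    exact ENNReal.ofReal_le_ofReal habs
  -- Lower bound: eventually F t > L - ε₀/2
  have hlower : ∀ᶠ t in atTop, L - ε₀ / 2 < exp (-lam * t) * f t := by
    by_contra hcon
    rw [Filter.not_eventually] at hcon
    have hfreq := Filter.frequently_atTop.1 hcon
    set a := L - ε₀ / 2 with hadef
    set b := L - ε₀ / 4 with hbdef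
    have hapos : 0 < a := by simp only [hadef]; linarith
    have hbpos : 0 < b := by simp only [hbdef]; linarith
    have hab : a < b := by simp only [hadef, hbdef]; linarith
    set δ := Real.log (b / a) / lam with hδdef
    have hδpos : 0 < δ :=
      div_pos (Real.log_pos ((one_lt_div hapos).2 hab)) hlam
    have hexpδ : exp (lam * δ) = b / a := by
      rw [show lam * δ = Real.log (b / a) by rw [hδdef]; field_simp; try ring,
        Real.exp_log (div_pos hbpos hapos)]
    refine key_lemma (ε₀ / 8) δ (by positivity) hδpos _ ?_ hIne
    intro T
    obtain ⟨t, ht, htF⟩ := hfreq (max (max T T₀) 0 + δ)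
    push_neg at htF
    have htF' : exp (-lam * t) * f t ≤ a := htF
    set u := t - δ with hudef
    have hu : max (max T T₀) 0 ≤ u := by simp only [hudef]; linarith
    have hu0 : 0 ≤ u := le_trans (le_max_right _ 0) hu
    have huT₀ : T₀ ≤ u := le_trans (le_trans (le_max_right T T₀) (le_max_left _ 0)) hu
    refine ⟨u, le_trans (le_trans (le_max_left T T₀) (le_max_left _ 0)) hu, ?_⟩
    intro s hs
    have hsu : u + δ = t := by simp only [hudef]; ring
    have hs0 : 0 ≤ s := le_trans hu0 hs.1.le
    have hst : s ≤ t := by rw [← hsu]; exact hs.2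
    have hfs : f s ≤ f t :=
      hfmono (Set.mem_Ici.2 hs0) (Set.mem_Ici.2 (hs0.trans hst)) hst
    have hexps : exp (lam * (t - s)) ≤ b / a := by
      rw [← hexpδ]
      apply Real.exp_le_exp.2
      have : t - s ≤ δ := by rw [← hsu] at hst ⊢; linarith [hs.1]
      nlinarith [hlam.le]
    have hkey : exp (-lam * s) * f s ≤ b := by
      have h1 : exp (-lam * s) * f t = exp (lam * (t - s)) * (exp (-lam * t) * f t) := by
        rw [← mul_assoc, ← Real.exp_add]; ring_nf
      have hFt0 : 0 ≤ exp (-lam * t) * f t :=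
        mul_nonneg (Real.exp_nonneg _) (hf0 t (hs0.trans hst))
      have h2 : exp (lam * (t - s)) * (exp (-lam * t) * f t) ≤ b / a * a :=
        mul_le_mul hexps htF' hFt0 (by positivity)
      rw [div_mul_cancel₀ _ hapos.ne'] at h2
      calc exp (-lam * s) * f s ≤ exp (-lam * s) * f t :=
            mul_le_mul_of_nonneg_left hfs (Real.exp_nonneg _)
        _ ≤ b := by rw [h1]; exact h2
    have hGs : L - ε₀ / 8 < exp (-lam * s) * g s := hT₀ s (huT₀.trans hs.1.le)
    have hdiff : ε₀ / 8 ≤ exp (-lam * s) * (g s - f s) := by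
      have : exp (-lam * s) * (g s - f s)
          = exp (-lam * s) * g s - exp (-lam * s) * f s := by ring
      rw [this]
      simp only [hbdef] at hkey
      linarith
    have habs : ε₀ / 8 ≤ exp (-lam * s) * |f s - g s| := by
      have hpos : 0 < g s - f s := by
        by_contra hle
        push_neg at hle
        nlinarith [Real.exp_pos (-lam * s)]
      rw [abs_sub_comm, abs_of_pos hpos]
      exact hdiff
    exact ENNReal.ofReal_le_ofReal habs
  rw [← eventually_atTop]
  filter_upwards [hupper, hlower] with t h1 h2
  rw [Real.dist_eq]
  have : |exp (-lam * t) * f t - L| ≤ ε₀ / 2 := by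
    rw [abs_le]; constructor <;> linarith
  linarith
end

section
/- Let λ > 0, and suppose (t_n) is a strictly increasing sequence with t_{n+1} - t_n > δ/(λ(2+2δ)) for some δ > 0, and f : [0,∞) → [0,∞) is nondecreasing with e^{-λ t_n} f(t_n) ≥ L(1+δ) for all n, where L > 0. If g satisfies e^{-λt} g(t) ≤ L(1+δ/2) for all t ≥ t₀, then ∫₀^∞ e^{-λt}|f(t) - g(t)| dt = ∞. -/
open Real MeasureTheory Set Filter

/-- The `limsup` half of the Harris argument: if `(t_n)` is strictly increasing
with gaps `t_{n+1}-t_n > δ/(λ(2+2δ))`, `f` is nondecreasing and nonnegative with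
`e^{-λ t_n} f(t_n) ≥ L(1+δ)` for all `n`, and `e^{-λt} g(t) ≤ L(1+δ/2)` for all
`t ≥ t₀`, then `∫₀^∞ e^{-λt}|f(t)-g(t)| dt = ∞`. -/
theorem stmt10 (lam δ L t₀ : ℝ) (hlam : 0 < lam) (hδ : 0 < δ) (hL : 0 < L)
    (t : ℕ → ℝ) (htmono : StrictMono t) (ht0 : 0 ≤ t 0)
    (hgap : ∀ n, δ / (lam * (2 + 2 * δ)) < t (n + 1) - t n)
    (f g : ℝ → ℝ)
    (hf0 : ∀ s, 0 ≤ s → 0 ≤ f s) (hg0 : ∀ s, 0 ≤ s → 0 ≤ g s)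
    (hfmono : MonotoneOn f (Ici (0:ℝ)))
    (hfbig : ∀ n, L * (1 + δ) ≤ exp (-lam * t n) * f (t n))
    (hgsmall : ∀ s, t₀ ≤ s → exp (-lam * s) * g s ≤ L * (1 + δ / 2)) :
    ∫⁻ s in Ioi (0:ℝ), ENNReal.ofReal (exp (-lam * s) * |f s - g s|) = ⊤ := by
  set η := δ / (lam * (2 + 2 * δ)) with hηdef
  have hη : 0 < η := by
    apply div_pos hδ
    positivity
  -- lower bound on t n
  have hlow : ∀ n : ℕ, t 0 + n * η ≤ t n := by
    intro n
    induction n with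
    | zero => simp
    | succ n ih =>
      have h := hgap n
      push_cast
      nlinarith
  -- choose N with t N ≥ t₀
  obtain ⟨N, hN⟩ : ∃ N : ℕ, t₀ ≤ t N := by
    obtain ⟨N, hN⟩ := exists_nat_ge ((t₀ - t 0) / η)
    refine ⟨N, ?_⟩
    have h1 : t₀ - t 0 ≤ N * η := by
      rw [div_le_iff₀ hη] at hN
      linarith
    have := hlow N
    linarith
  set c : ℝ := L * δ / 4 with hcdef
  have hc : 0 < c := by positivity
  set I : ℕ → Set ℝ := fun n => Ioc (t (N + n)) (t (N + n) + η / 2) with hIdef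
  have hIm : ∀ n, MeasurableSet (I n) := fun n => measurableSet_Ioc
  have key : ∀ m n : ℕ, m < n → t (N + m) + η / 2 ≤ t (N + n) := by
    intro m n h
    have h1 := hgap (N + m)
    have h2 : t (N + m + 1) ≤ t (N + n) := htmono.monotone (by omega)
    have : η < t (N + m + 1) - t (N + m) := h1
    linarith
  have hdisj : Pairwise (Function.onFun Disjoint I) := by
    intro m n hmn
    rcases hmn.lt_or_gt with h | h
    · exact Set.Ioc_disjoint_Ioc.2
        (min_le_of_left_le (le_max_of_le_right (key m n h)))
    · exact (Set.Ioc_disjoint_Ioc.2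
        (min_le_of_left_le (le_max_of_le_right (key n m h)))).symm
  have hsub : (⋃ n, I n) ⊆ Ioi (0:ℝ) := by
    intro s hs
    obtain ⟨n, hn⟩ := mem_iUnion.1 hs
    have h0 : (0:ℝ) ≤ t (N + n) := le_trans ht0 (htmono.monotone (Nat.zero_le _))
    exact lt_of_le_of_lt h0 hn.1
  -- pointwise bound on each piece
  have hbound : ∀ n : ℕ, ∀ s ∈ I n,
      ENNReal.ofReal c ≤ ENNReal.ofReal (exp (-lam * s) * |f s - g s|) := by
    intro n s hs
    set a := t (N + n) with hadef
    have ha0 : (0:ℝ) ≤ a := le_trans ht0 (htmono.monotone (Nat.zero_le _))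
    have hat₀ : t₀ ≤ a := le_trans hN (htmono.monotone (Nat.le_add_right _ _))
    have has : a < s := hs.1
    have hsa : s ≤ a + η / 2 := hs.2
    have hs0 : (0:ℝ) ≤ s := le_trans ha0 has.le
    have hE : (0:ℝ) < exp (-lam * s) := exp_pos _
    -- g bound
    have hg : exp (-lam * s) * g s ≤ L * (1 + δ / 2) := hgsmall s (le_trans hat₀ has.le)
    -- f bound
    have hfs : f a ≤ f s := hfmono ha0 hs0 has.le
    have hfa := hfbig (N + n)
    have hsplit : exp (-lam * s) = exp (-lam * (s - a)) * exp (-lam * a) := by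
      rw [← Real.exp_add]; ring_nf
    have hexp1 : 1 - lam * (s - a) ≤ exp (-lam * (s - a)) := by
      have h2 := Real.add_one_le_exp (-(lam * (s - a)))
      have h : -(lam * (s - a)) = -lam * (s - a) := by ring
      rw [h] at h2
      linarith
    have hu : lam * (s - a) ≤ δ / (4 + 4 * δ) := by
      have h1 : s - a ≤ η / 2 := by linarith
      have h2 : lam * (s - a) ≤ lam * (η / 2) :=
        mul_le_mul_of_nonneg_left h1 hlam.le
      have h3 : lam * (η / 2) = δ / (4 + 4 * δ) := by
        rw [hηdef]
        field_simp
        ring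
      linarith
    have hfapos : 0 ≤ exp (-lam * a) * f a := mul_nonneg (exp_pos _).le (hf0 a ha0)
    have hLδ : (0:ℝ) < L * (1 + δ) := by positivity
    have hchain : (1 - δ / (4 + 4 * δ)) * (L * (1 + δ)) ≤ exp (-lam * s) * f s := by
      have step1 : exp (-lam * s) * f a ≤ exp (-lam * s) * f s :=
        mul_le_mul_of_nonneg_left hfs hE.le
      have step2 : exp (-lam * (s - a)) * (L * (1 + δ)) ≤ exp (-lam * s) * f a := by
        rw [hsplit, mul_assoc]
        exact mul_le_mul_of_nonneg_left hfa (exp_pos _).le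
      have step3 : (1 - δ / (4 + 4 * δ)) * (L * (1 + δ)) ≤
          exp (-lam * (s - a)) * (L * (1 + δ)) := by
        apply mul_le_mul_of_nonneg_right _ hLδ.le
        linarith
      linarith
    have hval : (1 - δ / (4 + 4 * δ)) * (L * (1 + δ)) = L * (1 + 3 * δ / 4) := by
      field_simp
      ring
    have habs : f s - g s ≤ |f s - g s| := le_abs_self _
    have hfinal : c ≤ exp (-lam * s) * |f s - g s| := by
      have h1 : exp (-lam * s) * (f s - g s) ≤ exp (-lam * s) * |f s - g s| :=
        mul_le_mul_of_nonneg_left habs hE.le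
      have h2 : L * (1 + 3 * δ / 4) - L * (1 + δ / 2) ≤ exp (-lam * s) * (f s - g s) := by
        rw [mul_sub]
        rw [hval] at hchain
        linarith
      have h3 : L * (1 + 3 * δ / 4) - L * (1 + δ / 2) = c := by
        rw [hcdef]; ring
      linarith
    exact ENNReal.ofReal_le_ofReal hfinal
  -- integral over each piece
  have hpiece : ∀ n : ℕ, ENNReal.ofReal c * ENNReal.ofReal (η / 2) ≤
      ∫⁻ s in I n, ENNReal.ofReal (exp (-lam * s) * |f s - g s|) := by
    intro n
    have h1 : (∫⁻ _x in I n, ENNReal.ofReal c) = ENNReal.ofReal c * ENNReal.ofReal (η / 2) := by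
      rw [setLIntegral_const]
      congr 1
      rw [hIdef]
      simp [Real.volume_Ioc]
    rw [← h1]
    refine lintegral_mono_ae ?_
    rw [ae_restrict_iff' (hIm n)]
    exact Filter.Eventually.of_forall (hbound n)
  -- combine
  have hmain : (⊤ : ENNReal) ≤
      ∫⁻ s in Ioi (0:ℝ), ENNReal.ofReal (exp (-lam * s) * |f s - g s|) := by
    have h1 : (∫⁻ s in (⋃ n, I n), ENNReal.ofReal (exp (-lam * s) * |f s - g s|)) ≤
        ∫⁻ s in Ioi (0:ℝ), ENNReal.ofReal (exp (-lam * s) * |f s - g s|) :=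
      lintegral_mono_set hsub
    rw [lintegral_iUnion hIm hdisj] at h1
    have h2 : (⊤ : ENNReal) = ∑' _n : ℕ, ENNReal.ofReal c * ENNReal.ofReal (η / 2) := by
      rw [ENNReal.tsum_const_eq_top_of_ne_zero]
      intro h
      rcases mul_eq_zero.1 h with h' | h' <;>
        simp [ENNReal.ofReal_eq_zero] at h' <;> linarith
    rw [h2]
    exact le_trans (ENNReal.tsum_le_tsum hpiece) h1
  exact top_le_iff.1 hmain
end
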